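/- arXiv:math/0211363 — 2 statements merged into one kernel-verified Lean document; each statement's English description precedes it below -/
import Mathlib

section
/- Let h : [0,∞) → [0,∞) be nonincreasing, and let g(x) = h(|x|) on ℝ^n be integrable. If G ∈ L¹_loc(ℝ^n), then for every x ∈ ℝ^n, |g ∗ G(x)| ≤ ‖g‖_{L¹} · sup_{r>0} (1/|B(0,r)|) ∫_{B(0,r)} |G(x - z)| dz. -/
open MeasureTheory Metric Set ENNReal Filter

lemma radial_superlevel_bound {n : ℕ} (hn : 0 < n) (h' : ℝ → ℝ) (hanti : Antitone h')
    (F : EuclideanSpace ℝ (Fin n) → ℝ≥0∞) (MM : ℝ≥0∞) (hMM : 0 < MM)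
    (hF : ∀ r : ℝ, 0 < r →
      ∫⁻ z in ball (0 : EuclideanSpace ℝ (Fin n)) r, F z ≤
        volume (ball (0 : EuclideanSpace ℝ (Fin n)) r) * MM)
    (t : ℝ) :
    ∫⁻ z in {z : EuclideanSpace ℝ (Fin n) | t < h' ‖z‖}, F z ≤
      volume {z : EuclideanSpace ℝ (Fin n) | t < h' ‖z‖} * MM := by
  haveI : Nontrivial (EuclideanSpace ℝ (Fin n)) := by
    refine ⟨EuclideanSpace.single ⟨0, hn⟩ (1 : ℝ), 0, fun hc => ?_⟩
    have := congrArg (fun v : EuclideanSpace ℝ (Fin n) => v ⟨0, hn⟩) hc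
    simp [EuclideanSpace.single_apply] at this
  set S : Set ℝ := {s | t < h' s} with hS
  have hlow : ∀ ⦃s s' : ℝ⦄, s' ≤ s → s ∈ S → s' ∈ S := fun s s' hle hs =>
    lt_of_lt_of_le hs (hanti hle)
  set A : Set (EuclideanSpace ℝ (Fin n)) := {z | t < h' ‖z‖} with hA
  by_cases hne : S.Nonempty
  · by_cases hbdd : BddAbove S
    · set R := sSup S with hR
      have hsub : A ⊆ closedBall 0 R := fun z hz => by
        simp only [mem_closedBall, dist_zero_right]
        exact le_csSup hbdd hz
      rcases le_or_gt R 0 with hR0 | hR0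
      · have h0 : A ⊆ closedBall (0 : EuclideanSpace ℝ (Fin n)) 0 :=
          hsub.trans (closedBall_subset_closedBall hR0)
        have : volume A = 0 := by
          refine measure_mono_null h0 ?_
          simp [closedBall_zero]
        rw [setLIntegral_measure_zero _ _ this]
        exact zero_le
      · have hball : ball (0 : EuclideanSpace ℝ (Fin n)) R ⊆ A := by
          intro z hz
          rw [mem_ball, dist_zero_right] at hz
          obtain ⟨s, hs, hlt⟩ := exists_lt_of_lt_csSup hne hz
          exact hlow hlt.le hs
        calc ∫⁻ z in A, F z ≤ ∫⁻ z in closedBall 0 R, F z :=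
              lintegral_mono_set hsub
          _ ≤ (∫⁻ z in ball 0 R, F z) + ∫⁻ z in sphere 0 R, F z := by
              rw [← ball_union_sphere]
              exact lintegral_union_le (μ := volume) F (ball 0 R) (sphere 0 R)
          _ = ∫⁻ z in ball 0 R, F z := by
              rw [setLIntegral_measure_zero _ _ (Measure.addHaar_sphere volume 0 R)]
              simp
          _ ≤ volume (ball (0 : EuclideanSpace ℝ (Fin n)) R) * MM := hF R hR0
          _ ≤ volume A * MM := mul_le_mul_left (measure_mono hball) _
    · have hAuniv : A = univ := by
        refine eq_univ_of_forall fun z => ?_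
        obtain ⟨s, hs, hlt⟩ := not_bddAbove_iff.mp hbdd ‖z‖
        exact hlow hlt.le hs
      have : volume A * MM = ∞ := by
        rw [hAuniv, measure_univ_of_isAddLeftInvariant, ENNReal.top_mul hMM.ne']
      rw [this]; exact le_top
  · have : A = ∅ := eq_empty_of_forall_notMem fun z hz => hne ⟨‖z‖, hz⟩
    rw [this, Measure.restrict_empty, lintegral_zero_measure]
    exact zero_le


/-- Radially decreasing majorant inequality: if `g(x) = h(|x|)` with `h` nonnegative and
nonincreasing on `[0, ∞)` and `g ∈ L¹(ℝⁿ)`, and `G` is locally integrable, then for any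
bound `M` dominating all the averages `(1/|B(0,r)|) ∫_{B(0,r)} |G(x - z)| dz` over balls
centered at the origin, one has `|g ∗ G(x)| ≤ ‖g‖_{L¹} · M`. -/
theorem radial_majorant_bound {n : ℕ} (h : ℝ → ℝ)
    (hh_nonneg : ∀ t, 0 ≤ t → 0 ≤ h t)
    (hh_mono : ∀ s t, 0 ≤ s → s ≤ t → h t ≤ h s)
    (g : EuclideanSpace ℝ (Fin n) → ℝ)
    (hg : ∀ x, g x = h ‖x‖)
    (hg_int : Integrable g)
    (G : EuclideanSpace ℝ (Fin n) → ℝ)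
    (hG : LocallyIntegrable G)
    (x : EuclideanSpace ℝ (Fin n)) (M : ℝ)
    (hM : ∀ r : ℝ, 0 < r →
      (volume (ball (0 : EuclideanSpace ℝ (Fin n)) r)).toReal⁻¹ *
        ∫ z in ball (0 : EuclideanSpace ℝ (Fin n)) r, |G (x - z)| ≤ M) :
    |∫ z, g z * G (x - z)| ≤ (∫ z, g z) * M := by
  have hg0 : ∀ z, 0 ≤ g z := fun z => by rw [hg]; exact hh_nonneg _ (norm_nonneg z)
  have hM0 : 0 ≤ M :=
    le_trans (mul_nonneg (inv_nonneg.mpr ENNReal.toReal_nonneg)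
      (integral_nonneg fun z => abs_nonneg _)) (hM 1 one_pos)
  rcases Nat.eq_zero_or_pos n with hn0 | hn
  · -- dimension 0 : the space is a single point
    subst hn0
    haveI : Unique (EuclideanSpace ℝ (Fin 0)) :=
      ⟨⟨0⟩, fun a => by ext i; exact i.elim0⟩
    have hx0 : ∀ z : EuclideanSpace ℝ (Fin 0), z = 0 := fun z => Subsingleton.elim z 0
    have hballuniv : ball (0 : EuclideanSpace ℝ (Fin 0)) 1 = univ := by
      ext z; simp [mem_ball, hx0 z]
    set v := (volume (univ : Set (EuclideanSpace ℝ (Fin 0)))).toReal with hv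
    have hvpos : 0 < v := by
      refine ENNReal.toReal_pos ?_ ?_
      · exact (isOpen_univ.measure_pos volume ⟨0, trivial⟩).ne'
      · exact (isCompact_univ.measure_lt_top).ne
    have key : ∀ f : EuclideanSpace ℝ (Fin 0) → ℝ, ∫ z, f z = v * f 0 := by
      intro f
      rw [show f = fun _ => f 0 from funext fun z => by rw [hx0 z]]
      rw [integral_const, smul_eq_mul]; rfl
    have h1 := hM 1 one_pos
    rw [hballuniv, Measure.restrict_univ, key] at h1
    have hGx : |G (x - 0)| ≤ M := by
      rwa [inv_mul_cancel_left₀ hvpos.ne'] at h1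
    rw [key, key]
    have habs : |v * (g 0 * G (x - 0))| = v * g 0 * |G (x - 0)| := by
      rw [abs_mul, abs_mul, abs_of_nonneg hvpos.le, abs_of_nonneg (hg0 0), mul_assoc]
    rw [habs, mul_assoc, mul_assoc]
    exact mul_le_mul_of_nonneg_left
      (mul_le_mul_of_nonneg_left hGx (hg0 0)) hvpos.le
  · -- dimension ≥ 1
    have hIntOn : ∀ r : ℝ, 0 < r →
        IntegrableOn (fun z : EuclideanSpace ℝ (Fin n) => G (x - z)) (ball 0 r) volume := by
      intro r hr
      have h1 : IntegrableOn G (ball x r) volume :=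
        (hG.integrableOn_isCompact (isCompact_closedBall x r)).mono_set ball_subset_closedBall
      have hpre : (fun z : EuclideanSpace ℝ (Fin n) => x - z) ⁻¹' (ball x r) = ball 0 r := by
        ext z
        simp [mem_ball, dist_eq_norm, sub_sub_cancel_left]
      have h2 := ((Measure.measurePreserving_sub_left
          (volume : Measure (EuclideanSpace ℝ (Fin n))) x).integrableOn_comp_preimage
          (MeasurableEquiv.subLeft x).measurableEmbedding).mpr h1
      rw [hpre] at h2
      exact h2
    by_cases hMzero : M = 0
    · -- M = 0 : then G(x-·) vanishes a.e.
      subst hMzero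
      have hzero : ∀ k : ℕ, ∀ᵐ z : EuclideanSpace ℝ (Fin n),
          z ∈ ball (0 : EuclideanSpace ℝ (Fin n)) ((k : ℝ) + 1) → |G (x - z)| = 0 := by
        intro k
        have hrpos : (0 : ℝ) < (k : ℝ) + 1 := by positivity
        have h2 := hM ((k : ℝ) + 1) hrpos
        have hvpos : 0 < (volume (ball (0 : EuclideanSpace ℝ (Fin n)) ((k:ℝ)+1))).toReal :=
          ENNReal.toReal_pos (measure_ball_pos _ _ hrpos).ne' measure_ball_lt_top.ne
        have hInonneg : 0 ≤ ∫ z in ball (0 : EuclideanSpace ℝ (Fin n)) ((k:ℝ)+1), |G (x - z)| :=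
          integral_nonneg fun z => abs_nonneg _
        have hI0 : ∫ z in ball (0 : EuclideanSpace ℝ (Fin n)) ((k:ℝ)+1), |G (x - z)| = 0 := by
          nlinarith [inv_pos.mpr hvpos]
        have hint := (hIntOn ((k:ℝ)+1) hrpos).abs
        have := (integral_eq_zero_iff_of_nonneg (fun z => abs_nonneg _) hint).mp hI0
        rw [Filter.EventuallyEq, ae_restrict_iff' measurableSet_ball] at this
        filter_upwards [this] with z hz hzball using hz hzball
      have hGzero : ∀ᵐ z : EuclideanSpace ℝ (Fin n), G (x - z) = 0 := by
        filter_upwards [ae_all_iff.mpr hzero] with z hz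
        obtain ⟨k, hk⟩ := exists_nat_gt ‖z‖
        have : z ∈ ball (0 : EuclideanSpace ℝ (Fin n)) ((k : ℝ) + 1) := by
          rw [mem_ball, dist_zero_right]; linarith
        exact abs_eq_zero.mp (hz k this)
      have : (fun z => g z * G (x - z)) =ᵐ[volume] 0 := by
        filter_upwards [hGzero] with z hz
        simp [hz]
      rw [integral_congr_ae this]
      simp
    · have hMpos : 0 < M := lt_of_le_of_ne hM0 (Ne.symm hMzero)
      set h' : ℝ → ℝ := fun s => h (max s 0) with hh'
      have hanti : Antitone h' := fun s t hst =>
        hh_mono (max s 0) (max t 0) (le_max_right s 0) (max_le_max hst le_rfl)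
      have hg' : ∀ z : EuclideanSpace ℝ (Fin n), g z = h' ‖z‖ := fun z => by
        rw [hg]; simp [hh', max_eq_left (norm_nonneg z)]
      have hgm : Measurable g := by
        rw [show g = fun z => h' ‖z‖ from funext hg']
        exact hanti.measurable.comp measurable_norm
      set G' := hG.aestronglyMeasurable.mk G with hG'def
      have hG'm : StronglyMeasurable G' := hG.aestronglyMeasurable.stronglyMeasurable_mk
      have hG'ae : G =ᵐ[volume] G' := hG.aestronglyMeasurable.ae_eq_mk
      have hqmp := (Measure.measurePreserving_sub_left
        (volume : Measure (EuclideanSpace ℝ (Fin n))) x).quasiMeasurePreserving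
      have haex : (fun z : EuclideanSpace ℝ (Fin n) => G (x - z)) =ᵐ[volume]
          (fun z => G' (x - z)) := hqmp.ae_eq_comp hG'ae
      set F : EuclideanSpace ℝ (Fin n) → ℝ≥0∞ := fun z => ENNReal.ofReal |G' (x - z)| with hFdef
      have hFm : Measurable F := by
        apply ENNReal.measurable_ofReal.comp
        exact (hG'm.measurable.comp (measurable_const.sub measurable_id)).abs
      have hFbound : ∀ r : ℝ, 0 < r →
          ∫⁻ z in ball (0 : EuclideanSpace ℝ (Fin n)) r, F z ≤
            volume (ball (0 : EuclideanSpace ℝ (Fin n)) r) * ENNReal.ofReal M := by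
        intro r hr
        have hint := (hIntOn r hr).abs
        have heq1 : ∫⁻ z in ball (0 : EuclideanSpace ℝ (Fin n)) r, F z =
            ∫⁻ z in ball (0 : EuclideanSpace ℝ (Fin n)) r, ENNReal.ofReal |G (x - z)| := by
          apply lintegral_congr_ae
          filter_upwards [ae_restrict_of_ae haex] with z hz
          rw [hFdef]; simp only [hz]
        rw [heq1, ← ofReal_integral_eq_lintegral_ofReal hint
          (Eventually.of_forall fun z => abs_nonneg _)]
        have h2 := hM r hr
        have hvlt : volume (ball (0 : EuclideanSpace ℝ (Fin n)) r) ≠ ⊤ := measure_ball_lt_top.ne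
        have hvpos : 0 < (volume (ball (0 : EuclideanSpace ℝ (Fin n)) r)).toReal :=
          ENNReal.toReal_pos (measure_ball_pos _ _ hr).ne' hvlt
        have h3 : ∫ z in ball (0 : EuclideanSpace ℝ (Fin n)) r, |G (x - z)| ≤
            (volume (ball (0 : EuclideanSpace ℝ (Fin n)) r)).toReal * M := by
          have := mul_le_mul_of_nonneg_left h2 hvpos.le
          rwa [mul_inv_cancel_left₀ hvpos.ne'] at this
        calc ENNReal.ofReal (∫ z in ball (0 : EuclideanSpace ℝ (Fin n)) r, |G (x - z)|)
            ≤ ENNReal.ofReal ((volume (ball (0 : EuclideanSpace ℝ (Fin n)) r)).toReal * M) :=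
              ENNReal.ofReal_le_ofReal h3
          _ = volume (ball (0 : EuclideanSpace ℝ (Fin n)) r) * ENNReal.ofReal M := by
              rw [ENNReal.ofReal_mul ENNReal.toReal_nonneg, ENNReal.ofReal_toReal hvlt]
      have hMM : (0 : ℝ≥0∞) < ENNReal.ofReal M := ENNReal.ofReal_pos.mpr hMpos
      -- key inequality in ℝ≥0∞
      have main : ∫⁻ z, ENNReal.ofReal (g z) * F z ≤
          (∫⁻ z, ENNReal.ofReal (g z)) * ENNReal.ofReal M := by
        have hψm : Measurable (Function.uncurry
            fun (z : EuclideanSpace ℝ (Fin n)) (t : ℝ) => if t < g z then F z else 0) := by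
          apply Measurable.ite ?_ (hFm.comp measurable_fst) measurable_const
          exact measurableSet_lt measurable_snd (hgm.comp measurable_fst)
        have step1 : ∀ z, ENNReal.ofReal (g z) * F z =
            ∫⁻ t in Ioi (0 : ℝ), if t < g z then F z else 0 := by
          intro z
          have hfun : (fun t : ℝ => if t < g z then F z else 0) =
              (Iio (g z)).indicator fun _ => F z := by
            funext t; simp [Set.indicator_apply, mem_Iio]
          rw [hfun, lintegral_indicator measurableSet_Iio,
            Measure.restrict_restrict measurableSet_Iio, setLIntegral_const,
            Iio_inter_Ioi, Real.volume_Ioo, sub_zero, mul_comm]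
        calc ∫⁻ z, ENNReal.ofReal (g z) * F z
            = ∫⁻ z, ∫⁻ t in Ioi (0 : ℝ), (if t < g z then F z else 0) :=
              lintegral_congr step1
          _ = ∫⁻ t in Ioi (0 : ℝ), ∫⁻ z, (if t < g z then F z else 0) :=
              lintegral_lintegral_swap hψm.aemeasurable
          _ ≤ ∫⁻ t in Ioi (0 : ℝ), volume {z : EuclideanSpace ℝ (Fin n) | t < g z} *
                ENNReal.ofReal M := by
              refine lintegral_mono fun t => ?_
              have hset : MeasurableSet {z : EuclideanSpace ℝ (Fin n) | t < g z} :=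
                measurableSet_lt measurable_const hgm
              have heq : ∫⁻ z, (if t < g z then F z else 0) =
                  ∫⁻ z in {z : EuclideanSpace ℝ (Fin n) | t < g z}, F z := by
                rw [← lintegral_indicator hset]
                congr 1
              rw [heq]
              have hsets : {z : EuclideanSpace ℝ (Fin n) | t < g z} =
                  {z : EuclideanSpace ℝ (Fin n) | t < h' ‖z‖} := by
                ext z; rw [mem_setOf_eq, mem_setOf_eq, hg' z]
              rw [hsets]
              exact radial_superlevel_bound hn h' hanti F (ENNReal.ofReal M) hMM hFbound t
          _ = (∫⁻ t in Ioi (0 : ℝ), volume {z : EuclideanSpace ℝ (Fin n) | t < g z}) *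
                ENNReal.ofReal M := lintegral_mul_const' _ _ ENNReal.ofReal_ne_top
          _ = (∫⁻ z, ENNReal.ofReal (g z)) * ENNReal.ofReal M := by
              rw [← lintegral_eq_lintegral_meas_lt volume (Eventually.of_forall hg0)
                hgm.aemeasurable]
      -- convert back to real integrals
      have hg_lint_ne : ∫⁻ z, ENNReal.ofReal (g z) ≠ ⊤ := by
        have heq : ∫⁻ z, ENNReal.ofReal (g z) = ∫⁻ z, (‖g z‖₊ : ℝ≥0∞) := by
          apply lintegral_congr fun z => ?_
          rw [← enorm_eq_nnnorm, ← ofReal_norm_eq_enorm, Real.norm_eq_abs, abs_of_nonneg (hg0 z)]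
        rw [heq]
        exact hg_int.hasFiniteIntegral.ne
      have hGxm : AEStronglyMeasurable (fun z : EuclideanSpace ℝ (Fin n) => G (x - z)) volume :=
        hG.aestronglyMeasurable.comp_quasiMeasurePreserving hqmp
      have habs_m : AEStronglyMeasurable
          (fun z : EuclideanSpace ℝ (Fin n) => g z * |G (x - z)|) volume := by
        exact hgm.aestronglyMeasurable.mul hGxm.norm
      calc |∫ z, g z * G (x - z)|
          ≤ ∫ z, |g z * G (x - z)| := by
            simpa only [Real.norm_eq_abs] using
              norm_integral_le_integral_norm (μ := volume) fun z => g z * G (x - z)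
        _ = ∫ z, g z * |G (x - z)| := by
            congr 1; funext z; rw [abs_mul, abs_of_nonneg (hg0 z)]
        _ = (∫⁻ z, ENNReal.ofReal (g z * |G (x - z)|)).toReal :=
            integral_eq_lintegral_of_nonneg_ae
              (Eventually.of_forall fun z => mul_nonneg (hg0 z) (abs_nonneg _)) habs_m
        _ = (∫⁻ z, ENNReal.ofReal (g z) * F z).toReal := by
            congr 1
            apply lintegral_congr_ae
            filter_upwards [haex] with z hz
            rw [ENNReal.ofReal_mul (hg0 z), hFdef]
            simp only [hz]
        _ ≤ ((∫⁻ z, ENNReal.ofReal (g z)) * ENNReal.ofReal M).toReal :=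
            ENNReal.toReal_mono (ENNReal.mul_ne_top hg_lint_ne ENNReal.ofReal_ne_top) main
        _ = (∫ z, g z) * M := by
            rw [ENNReal.toReal_mul, ENNReal.toReal_ofReal hM0,
              integral_eq_lintegral_of_nonneg_ae (Eventually.of_forall hg0)
                hgm.aestronglyMeasurable]
end

section
/- For a dyadic cube I_T ⊆ ℝ^n of side length L, fix an integer k ≥ 0 and consider the pairwise disjoint dyadic subcubes I_p ⊆ I_T of side length 2^{-k}L. Then ∑_p (dist((I_T)^c, I_p)/(2^{-k}L))^{-9n} ≤ C(n)·2^{k(n-1)}, where the sum is over those subcubes with dist((I_T)^c, I_p) > 0, and C(n) depends only on n. -/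
/-!
Write `s = L / N` with `N = 2 ^ k`. The distance from the subcube `m` to the complement of the
big cube is `s · min_j g(m j)`, where `g(i) = min(i, N - 1 - i)` counts the slabs between slab `i`
and the nearer face. A subcube at positive distance therefore has all `g(m j) ≥ 1`, and its term is
at most `min_j g(m j)⁻ᵖ ≤ ∑_j g(m j)⁻²` once `p ≥ 2`. Summed over all subcubes, each axis `j`
contributes `N ^ (n - 1)` copies of the one-dimensional sum `∑_i g(i)⁻² ≤ 2 ∑ 1 / i² ≤ 4`.
-/

open MeasureTheory Metric
open scoped Classical

noncomputable def setDist {X : Type*} [PseudoMetricSpace X] (A B : Set X) : ℝ :=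
  (⨅ x ∈ A, EMetric.infEdist x B).toReal

open Finset

section SetDist

variable {X : Type*} [PseudoMetricSpace X] {A B : Set X}

lemma setDist_le_dist {x y : X} (hx : x ∈ A) (hy : y ∈ B) : setDist A B ≤ dist x y := by
  have h : (⨅ x ∈ A, Metric.infEDist x B) ≤ edist x y :=
    (biInf_le _ hx).trans (Metric.infEDist_le_edist_of_mem hy)
  rw [dist_edist]
  exact ENNReal.toReal_mono (edist_ne_top x y) h

lemma le_setDist {c : ℝ} (hA : A.Nonempty) (hB : B.Nonempty)
    (h : ∀ x ∈ A, ∀ y ∈ B, c ≤ dist x y) : c ≤ setDist A B := by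
  rcases le_or_gt c 0 with hc | hc
  · exact hc.trans ENNReal.toReal_nonneg
  obtain ⟨x₀, hx₀⟩ := hA
  have hne : (⨅ x ∈ A, Metric.infEDist x B) ≠ ⊤ :=
    ne_top_of_le_ne_top (Metric.infEDist_ne_top hB) (biInf_le _ hx₀)
  have hle : ENNReal.ofReal c ≤ ⨅ x ∈ A, Metric.infEDist x B :=
    le_iInf₂ fun x hx => Metric.le_infEDist.2 fun y hy => by
      rw [edist_dist]
      exact ENNReal.ofReal_le_ofReal (h x hx y hy)
  rw [← ENNReal.toReal_ofReal hc.le]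
  exact ENNReal.toReal_mono hne hle

end SetDist

lemma Fintype.sum_comp_eval {ι κ R : Type*} [Fintype ι] [DecidableEq ι] [Fintype κ]
    [AddCommMonoid R] (f : κ → R) (j : ι) :
    ∑ m : ι → κ, f (m j) = (Fintype.card κ ^ (Fintype.card ι - 1)) • ∑ k, f k := by
  rw [← (Equiv.funSplitAt j κ).symm.sum_comp, Fintype.sum_prod_type]
  simp only [Equiv.funSplitAt_symm_apply, dite_true, sum_const, card_univ, ← sum_nsmul]
  rw [Fintype.card_fun, Fintype.card_subtype_compl, Fintype.card_subtype_eq]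

lemma Fin.cast_val_rev {N : ℕ} (i : Fin N) : ((i.rev : ℕ) : ℝ) = N - (i + 1) := by
  rw [Fin.val_rev, Nat.cast_sub i.isLt]
  push_cast
  ring

def boundaryGap {N : ℕ} (i : Fin N) : ℕ := min i i.rev

lemma sum_inv_sq_boundaryGap_le (N : ℕ) : ∑ i : Fin N, ((boundaryGap i : ℝ) ^ 2)⁻¹ ≤ 4 := by
  have hpoint : ∀ i : Fin N,
      ((boundaryGap i : ℝ) ^ 2)⁻¹ ≤ (((i : ℕ) : ℝ) ^ 2)⁻¹ + (((i.rev : ℕ) : ℝ) ^ 2)⁻¹ := by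
    intro i
    rcases min_choice (i : ℕ) i.rev with h | h <;> rw [boundaryGap, h]
    · linarith [inv_nonneg.2 (sq_nonneg ((i.rev : ℕ) : ℝ))]
    · linarith [inv_nonneg.2 (sq_nonneg ((i : ℕ) : ℝ))]
  -- the `i = 0` term vanishes since `0⁻¹ = 0`, leaving a partial sum of `∑ 1 / i ^ 2`
  have hhalf : ∑ i : Fin N, (((i : ℕ) : ℝ) ^ 2)⁻¹ ≤ 2 := by
    have hzero : ∀ i ∈ range N, i ∉ Ioo 0 N → ((i : ℝ) ^ 2)⁻¹ = 0 := fun i hi hi' => by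
      obtain rfl : i = 0 := by simp only [mem_range, mem_Ioo] at hi hi'; omega
      simp
    rw [Fin.sum_univ_eq_sum_range (fun i => ((i : ℝ) ^ 2)⁻¹),
      ← sum_subset (fun i hi => mem_range.2 (mem_Ioo.1 hi).2) hzero]
    simpa using sum_Ioo_inv_sq_le (α := ℝ) 0 N
  calc ∑ i : Fin N, ((boundaryGap i : ℝ) ^ 2)⁻¹
      ≤ ∑ i : Fin N, ((((i : ℕ) : ℝ) ^ 2)⁻¹ + (((i.rev : ℕ) : ℝ) ^ 2)⁻¹) :=
        sum_le_sum fun i _ => hpoint i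
    _ = 2 * ∑ i : Fin N, (((i : ℕ) : ℝ) ^ 2)⁻¹ := by
        rw [sum_add_distrib, two_mul]
        congr 1
        exact Equiv.sum_comp Fin.revPerm fun i => (((i : ℕ) : ℝ) ^ 2)⁻¹
    _ ≤ 4 := by linarith

section Cubes

variable {n N : ℕ} {a : EuclideanSpace ℝ (Fin n)} {s L p : ℝ}

def cube (a : EuclideanSpace ℝ (Fin n)) (L : ℝ) : Set (EuclideanSpace ℝ (Fin n)) :=
  {x | ∀ j, x j ∈ Set.Ico (a j) (a j + L)}

def subcube (a : EuclideanSpace ℝ (Fin n)) (s : ℝ) (m : Fin n → Fin N) :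
    Set (EuclideanSpace ℝ (Fin n)) :=
  {x | ∀ j, x j ∈ Set.Ico (a j + (m j : ℝ) * s) (a j + ((m j : ℝ) + 1) * s)}

def subcubeCorner (a : EuclideanSpace ℝ (Fin n)) (s : ℝ) (m : Fin n → Fin N) :
    EuclideanSpace ℝ (Fin n) :=
  WithLp.toLp 2 fun j => a j + (m j : ℝ) * s

lemma mem_compl_cube_iff {x : EuclideanSpace ℝ (Fin n)} :
    x ∈ (cube a L)ᶜ ↔ ∃ j, x j < a j ∨ a j + L ≤ x j := by
  simp only [cube, Set.mem_compl_iff, Set.mem_ofPred_eq, Set.mem_Ico, not_forall, not_and_or,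
    not_le, not_lt]

lemma subcubeCorner_mem (hs : 0 < s) (m : Fin n → Fin N) :
    subcubeCorner a s m ∈ subcube a s m := fun j =>
  ⟨le_rfl, by simp only [subcubeCorner]; linarith⟩

lemma boundaryGap_mul_le_abs_sub (hs : 0 ≤ s) (hL : N * s = L) {i : Fin N} {a x y : ℝ}
    (hy : y ∈ Set.Ico (a + i * s) (a + (i + 1) * s)) (hx : x < a ∨ a + L ≤ x) :
    boundaryGap i * s ≤ |x - y| := by
  rcases hx with hx | hx
  · have hgap : (boundaryGap i : ℝ) ≤ i := by exact_mod_cast min_le_left _ _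
    rw [abs_sub_comm]
    nlinarith [le_abs_self (y - x), hy.1]
  · have hgap : (boundaryGap i : ℝ) ≤ N - (i + 1) := by
      rw [← Fin.cast_val_rev]
      exact_mod_cast min_le_right _ _
    nlinarith [le_abs_self (x - y), hy.2]

lemma le_setDist_compl_cube_subcube [Nonempty (Fin n)] (hs : 0 < s) (hL : N * s = L)
    {m : Fin n → Fin N} {t : ℕ} (ht : ∀ j, t ≤ boundaryGap (m j)) :
    t * s ≤ setDist (cube a L)ᶜ (subcube a s m) := by
  have hcompl : ((cube a L)ᶜ).Nonempty :=
    ⟨WithLp.toLp 2 fun j => a j - 1, mem_compl_cube_iff.2 ⟨Classical.arbitrary _, by simp⟩⟩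
  refine le_setDist hcompl ⟨_, subcubeCorner_mem hs m⟩ fun x hx y hy => ?_
  obtain ⟨j, hj⟩ := mem_compl_cube_iff.1 hx
  calc (t : ℝ) * s ≤ boundaryGap (m j) * s := by gcongr; exact ht j
    _ ≤ |x j - y j| := boundaryGap_mul_le_abs_sub hs.le hL (hy j) hj
    _ ≤ dist x y := PiLp.dist_apply_le x y j

lemma setDist_compl_cube_subcube_le (hs : 0 < s) (hL : N * s = L) (m : Fin n → Fin N)
    (j : Fin n) : setDist (cube a L)ᶜ (subcube a s m) ≤ boundaryGap (m j) * s := by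
  refine le_of_forall_pos_le_add fun ε hε => ?_
  set δ := min ε s
  have hδ : 0 < δ := lt_min hε hs
  suffices h : setDist (cube a L)ᶜ (subcube a s m) ≤ boundaryGap (m j) * s + δ from
    h.trans (by gcongr; exact min_le_left _ _)
  set e : EuclideanSpace ℝ (Fin n) := PiLp.single 2 j 1
  have he : ∀ i, e i = if i = j then 1 else 0 := PiLp.single_apply 2 ℝ j 1
  set c := subcubeCorner a s m
  have hc : c ∈ subcube a s m := subcubeCorner_mem hs m
  rcases min_choice (m j : ℕ) (m j).rev with hmin | hmin <;>
    rw [boundaryGap, hmin]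
  · -- step off the lower face `x j = a j`
    have hx : c - ((m j : ℝ) * s + δ) • e ∈ (cube a L)ᶜ :=
      mem_compl_cube_iff.2 ⟨j, Or.inl (by simp [he, c, subcubeCorner]; linarith)⟩
    calc _ ≤ dist (c - ((m j : ℝ) * s + δ) • e) c := setDist_le_dist hx hc
      _ = (m j : ℝ) * s + δ := by
        rw [dist_self_sub_left, norm_smul, PiLp.norm_single, norm_one, mul_one,
          Real.norm_of_nonneg (by positivity)]
  · -- step off the upper face `x j = a j + L`, starting from a point of the subcube near it
    have hy : c + (s - δ) • e ∈ subcube a s m := fun i => by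
      by_cases hij : i = j
      · subst hij
        simp only [PiLp.add_apply, PiLp.smul_apply, he, if_true, smul_eq_mul, mul_one, c,
          subcubeCorner, Set.mem_Ico]
        constructor <;> linarith [min_le_right ε s]
      · simpa [he, hij] using hc i
    have hx : c + (s - δ) • e + ((m j).rev * s + δ) • e ∈ (cube a L)ᶜ := by
      refine mem_compl_cube_iff.2 ⟨j, Or.inr (le_of_eq ?_)⟩
      simp only [PiLp.add_apply, PiLp.smul_apply, he, if_true, smul_eq_mul, mul_one, c,
        subcubeCorner, Fin.cast_val_rev, ← hL]
      ring
    calc _ ≤ dist (c + (s - δ) • e + ((m j).rev * s + δ) • e) (c + (s - δ) • e) :=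
          setDist_le_dist hx hy
      _ = (m j).rev * s + δ := by
        rw [dist_self_add_left, norm_smul, PiLp.norm_single, norm_one, mul_one,
          Real.norm_of_nonneg (by positivity)]

lemma rpow_setDist_compl_cube_subcube_le [Nonempty (Fin n)] (hs : 0 < s) (hL : N * s = L)
    (hp : 2 ≤ p) {m : Fin n → Fin N} (hd : 0 < setDist (cube a L)ᶜ (subcube a s m)) :
    (setDist (cube a L)ᶜ (subcube a s m) / s) ^ (-p) ≤ ∑ j, ((boundaryGap (m j) : ℝ) ^ 2)⁻¹ := by
  obtain ⟨j₀, hj₀⟩ := Finite.exists_min fun j => boundaryGap (m j)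
  set g := boundaryGap (m j₀)
  have hlow : g * s ≤ setDist (cube a L)ᶜ (subcube a s m) :=
    le_setDist_compl_cube_subcube hs hL hj₀
  have hg : (0 : ℝ) < g :=
    pos_of_mul_pos_left (hd.trans_le (setDist_compl_cube_subcube_le hs hL m j₀)) hs.le
  have hg₁ : (1 : ℝ) ≤ g := Nat.one_le_cast.2 (Nat.cast_pos.1 hg)
  calc (setDist (cube a L)ᶜ (subcube a s m) / s) ^ (-p) ≤ (g : ℝ) ^ (-p) :=
        Real.rpow_le_rpow_of_nonpos hg ((le_div_iff₀ hs).2 hlow) (by linarith)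
    _ ≤ (g : ℝ) ^ (-2 : ℝ) := Real.rpow_le_rpow_of_exponent_le hg₁ (by linarith)
    _ = ((g : ℝ) ^ 2)⁻¹ := by rw [Real.rpow_neg hg.le, Real.rpow_two]
    _ ≤ ∑ j, ((boundaryGap (m j) : ℝ) ^ 2)⁻¹ :=
        single_le_sum (f := fun j => ((boundaryGap (m j) : ℝ) ^ 2)⁻¹)
          (fun j _ => by positivity) (mem_univ j₀)

theorem sum_rpow_setDist_compl_cube_subcube_le [Nonempty (Fin n)] (hs : 0 < s)
    (hL : N * s = L) (hp : 2 ≤ p) :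
    ∑ m ∈ univ.filter (fun m : Fin n → Fin N => 0 < setDist (cube a L)ᶜ (subcube a s m)),
        (setDist (cube a L)ᶜ (subcube a s m) / s) ^ (-p)
      ≤ 4 * n * (N : ℝ) ^ (n - 1) := by
  set w : Fin N → ℝ := fun i => ((boundaryGap i : ℝ) ^ 2)⁻¹
  calc _ ≤ ∑ m ∈ univ.filter (fun m : Fin n → Fin N => 0 < setDist (cube a L)ᶜ (subcube a s m)),
          ∑ j, w (m j) :=
        sum_le_sum fun m hm => rpow_setDist_compl_cube_subcube_le hs hL hp (mem_filter.1 hm).2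
    _ ≤ ∑ m : Fin n → Fin N, ∑ j, w (m j) :=
        sum_le_sum_of_subset_of_nonneg (filter_subset _ _) fun _ _ _ =>
          sum_nonneg fun _ _ => by positivity
    _ = ∑ _j : Fin n, (N : ℝ) ^ (n - 1) * ∑ i, w i := by
        rw [sum_comm]
        simp only [Fintype.sum_comp_eval, Fintype.card_fin, nsmul_eq_mul, Nat.cast_pow]
    _ ≤ 4 * n * (N : ℝ) ^ (n - 1) := by
        rw [sum_const, card_univ, Fintype.card_fin, nsmul_eq_mul]
        have := mul_le_mul_of_nonneg_left (sum_inv_sq_boundaryGap_le N)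
          (by positivity : (0 : ℝ) ≤ n * (N : ℝ) ^ (n - 1))
        linarith

end Cubes

/-- For a cube `I_T ⊆ ℝⁿ` of side `L` and an integer `k ≥ 0`, consider the `2^{kn}`
pairwise disjoint dyadic subcubes `I_p` of side `2^{-k}L`.  Then the sum of
`(dist((I_T)ᶜ, I_p)/(2^{-k}L))^{-9n}` over those subcubes not touching the boundary
(i.e. with `dist((I_T)ᶜ, I_p) > 0`) is at most `C(n)·2^{k(n-1)}`. -/
theorem sum_over_subcubes_bound (n : ℕ) (hn : 1 ≤ n) :
    ∃ C : ℝ, 0 < C ∧ ∀ (k : ℕ) (L : ℝ) (_ : 0 < L) (a : EuclideanSpace ℝ (Fin n)),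
      letI IT : Set (EuclideanSpace ℝ (Fin n)) :=
        {x | ∀ j, x j ∈ Set.Ico (a j) (a j + L)}
      letI s : ℝ := L / 2 ^ k
      letI Ip : (Fin n → Fin (2 ^ k)) → Set (EuclideanSpace ℝ (Fin n)) :=
        fun m => {x | ∀ j, x j ∈ Set.Ico (a j + (m j : ℝ) * s) (a j + ((m j : ℝ) + 1) * s)}
      ∑ m ∈ Finset.univ.filter (fun m => 0 < setDist ITᶜ (Ip m)),
          (setDist ITᶜ (Ip m) / s) ^ (-(9 * n : ℝ))
        ≤ C * 2 ^ (k * (n - 1)) := by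
  have : Nonempty (Fin n) := ⟨⟨0, hn⟩⟩
  have hn' : (1 : ℝ) ≤ n := by exact_mod_cast hn
  refine ⟨4 * n, by positivity, fun k L hL a => ?_⟩
  have hs : 0 < L / 2 ^ k := by positivity
  have hN : ((2 ^ k : ℕ) : ℝ) * (L / 2 ^ k) = L := by push_cast; field_simp
  calc _ ≤ 4 * n * ((2 ^ k : ℕ) : ℝ) ^ (n - 1) :=
        sum_rpow_setDist_compl_cube_subcube_le (a := a) hs hN (by linarith)
    _ = 4 * n * 2 ^ (k * (n - 1)) := by push_cast; rw [pow_mul]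
end
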